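/- arXiv:1004.0193 — 4 statements merged into one kernel-verified Lean document; each statement's English description precedes it below -/
import Mathlib

section
/- Let a, β > 0 and set A = (β/(a·e))^β. Then for every t ∈ ℝ, exp(-a·|t|^{1/β}) = inf over real γ ≥ 0 of ((γβ)/(a·e·|t|^{1/β}))^{γβ}. -/
open Real

theorem stmt_2 (a β : ℝ) (ha : 0 < a) (hβ : 0 < β) (t : ℝ) (ht : t ≠ 0) :
    Real.exp (-a * |t| ^ (1 / β)) =
      sInf {y : ℝ | ∃ γ : ℝ, 0 ≤ γ ∧
        y = ((γ * β) / (a * Real.exp 1 * |t| ^ (1 / β))) ^ (γ * β)} := by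
  set s := |t| ^ (1 / β) with hs
  have hspos : 0 < s := Real.rpow_pos_of_pos (abs_pos.mpr ht) _
  have hc : 0 < a * s := mul_pos ha hspos
  have he : (0:ℝ) < Real.exp 1 := Real.exp_pos 1
  apply le_antisymm
  · apply le_csInf ⟨1, by exact ⟨0, le_refl _, by simp⟩⟩
    rintro y ⟨γ, hγ, rfl⟩
    rcases eq_or_lt_of_le hγ with h0 | h0
    · rw [← h0]
      simp only [zero_mul, Real.rpow_zero]
      calc Real.exp (-a * s) ≤ Real.exp 0 := Real.exp_le_exp.mpr (by nlinarith)
        _ = 1 := Real.exp_zero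
    · set u := γ * β with hu
      have hupos : 0 < u := mul_pos h0 hβ
      have hbpos : 0 < u / (a * Real.exp 1 * s) := by positivity
      rw [Real.rpow_def_of_pos hbpos]
      apply Real.exp_le_exp.mpr
      have hlog : Real.log (u / (a * Real.exp 1 * s)) = Real.log (u / (a * s)) - 1 := by
        rw [Real.log_div hupos.ne' (by positivity), Real.log_div hupos.ne' (by positivity)]
        rw [show a * Real.exp 1 * s = (a * s) * Real.exp 1 by ring,
          Real.log_mul hc.ne' he.ne', Real.log_exp]
        ring
      rw [hlog]
      have hkey : 1 - (a * s) / u ≤ Real.log (u / (a * s)) := by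
        have := Real.log_le_sub_one_of_pos (show 0 < (a * s) / u by positivity)
        have hinv : Real.log ((a * s) / u) = - Real.log (u / (a * s)) := by
          rw [← Real.log_inv, inv_div]
        linarith
      have : -(a * s) ≤ (Real.log (u / (a * s)) - 1) * u := by
        have h2 : (1 - (a * s) / u - 1) * u ≤ (Real.log (u / (a * s)) - 1) * u := by
          apply mul_le_mul_of_nonneg_right (by linarith) hupos.le
        have h3 : (1 - (a * s) / u - 1) * u = -(a * s) := by
          field_simp
          ring
        linarith
      linarith [this]
  · apply csInf_le
    · exact ⟨0, by rintro y ⟨γ, hγ, rfl⟩; positivity⟩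
    · refine ⟨a * s / β, by positivity, ?_⟩
      have h1 : a * s / β * β = a * s := div_mul_cancel₀ _ hβ.ne'
      rw [h1]
      have h2 : a * s / (a * Real.exp 1 * s) = (Real.exp 1)⁻¹ := by
        field_simp
      rw [h2, ← Real.exp_neg, Real.rpow_def_of_pos (Real.exp_pos _), Real.log_exp]
      ring_nf
end

section
/- Let a, β > 0. Then for all t ∈ ℝ, the infimum over positive integers n of min{1, ((nβ)/(a·e·|t|^{1/β}))^{nβ}} is at most e^{eβ/2} · exp(-a·|t|^{1/β}). -/
open Real

theorem stmt_3 (a β : ℝ) (ha : 0 < a) (hβ : 0 < β) (t : ℝ) :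
    ⨅ n : ℕ+, min 1 ((((n : ℝ) * β) / (a * Real.exp 1 * |t| ^ (1 / β))) ^ ((n : ℝ) * β))
      ≤ Real.exp (Real.exp 1 * β / 2) * Real.exp (-a * |t| ^ (1 / β)) := by
  have hT0 : (0:ℝ) ≤ |t| ^ (1/β) := Real.rpow_nonneg (abs_nonneg t) _
  set T := |t| ^ (1/β) with hTdef
  set x := a * T with hxdef
  have hx0 : 0 ≤ x := mul_nonneg ha.le hT0
  have he : (2:ℝ) ≤ Real.exp 1 := by
    have := Real.add_one_le_exp (1:ℝ); linarith
  have hbdd : BddBelow (Set.range fun n : ℕ+ =>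
      min 1 ((((n:ℝ)*β)/(a*Real.exp 1*T))^((n:ℝ)*β))) := by
    refine ⟨0, ?_⟩
    rintro y ⟨n, rfl⟩
    exact le_min zero_le_one (Real.rpow_nonneg (by positivity) _)
  rw [← Real.exp_add]
  have hnegaT : Real.exp 1 * β / 2 + -a * T = Real.exp 1 * β / 2 - x := by
    rw [hxdef]; ring
  rw [hnegaT]
  rcases le_or_gt x (Real.exp 1 * β / 2) with hc | hc
  · -- small x : infimum ≤ 1 ≤ RHS
    have h2 : (1:ℝ) ≤ Real.exp (Real.exp 1 * β / 2 - x) :=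
      Real.one_le_exp (by linarith)
    exact le_trans (ciInf_le hbdd 1) (le_trans (min_le_left _ _) h2)
  · -- large x : choose n = ⌈x/β⌉
    have hx' : (0:ℝ) < x := lt_of_le_of_lt (by positivity) hc
    have hT' : (0:ℝ) < T := by
      by_contra h
      push_neg at h
      nlinarith
    set n : ℕ := ⌈x / β⌉₊ with hn
    have hnpos : 0 < n := Nat.ceil_pos.mpr (div_pos hx' hβ)
    set N : ℕ+ := ⟨n, hnpos⟩ with hN
    set s : ℝ := (n : ℝ) * β with hs
    have hs1 : x ≤ s := by
      have h := Nat.le_ceil (x / β)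
      calc x = (x / β) * β := by field_simp
        _ ≤ (n : ℝ) * β := by
            apply mul_le_mul_of_nonneg_right _ hβ.le
            exact_mod_cast h
    have hs2 : s ≤ x + β := by
      have h := Nat.ceil_lt_add_one (le_of_lt (div_pos hx' hβ))
      have h2 : (n : ℝ) ≤ x / β + 1 := le_of_lt h
      calc s = (n:ℝ) * β := rfl
        _ ≤ (x / β + 1) * β := mul_le_mul_of_nonneg_right h2 hβ.le
        _ = x + β := by field_simp
    have hspos : 0 < s := lt_of_lt_of_le hx' hs1
    refine le_trans (ciInf_le hbdd N) ?_
    refine le_trans (min_le_right _ _) ?_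
    have hNcast : ((N : ℕ) : ℝ) = (n : ℝ) := rfl
    have hden : a * Real.exp 1 * T = Real.exp 1 * x := by rw [hxdef]; ring
    have hbase : (0:ℝ) < s / (Real.exp 1 * x) :=
      div_pos hspos (mul_pos (Real.exp_pos 1) hx')
    have hterm : (((N:ℕ):ℝ) * β) / (a * Real.exp 1 * T) = s / (Real.exp 1 * x) := by
      rw [hNcast, hden]
    have hsN : ((N:ℕ):ℝ) * β = s := rfl
    rw [show ((((N:ℕ+):ℝ)) * β) / (a * Real.exp 1 * T) = s / (Real.exp 1 * x) from hterm,
        hsN, Real.rpow_def_of_pos hbase]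
    rw [Real.exp_le_exp]
    -- log (s/(e x)) = log(s/x) - 1
    have hlogsplit : Real.log (s / (Real.exp 1 * x)) = Real.log (s / x) - 1 := by
      rw [show s / (Real.exp 1 * x) = (s / x) / Real.exp 1 by rw [div_div, mul_comm],
        Real.log_div (ne_of_gt (div_pos hspos hx')) (Real.exp_ne_zero 1), Real.log_exp]
    rw [hlogsplit]
    set L := Real.log (s / x) with hL
    have hlog : L ≤ s / x - 1 := Real.log_le_sub_one_of_pos (div_pos hspos hx')
    have hA : x * L ≤ s - x := by
      have := mul_le_mul_of_nonneg_left hlog hx0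
      have hxx : x * (s / x - 1) = s - x := by field_simp
      linarith [hxx ▸ this]
    have h1 : (s - x) * L ≤ Real.exp 1 * β / 2 := by
      have h2 : x * ((s - x) * L) ≤ (s - x) * (s - x) := by nlinarith
      have hd1 : (s - x) * (s - x) ≤ β * β := by nlinarith
      have hd2 : β * β ≤ x * (Real.exp 1 * β / 2) := by
        nlinarith [mul_nonneg (sub_nonneg.mpr hc.le)
            (by positivity : (0:ℝ) ≤ Real.exp 1 * β / 2),
          mul_nonneg (mul_nonneg (sub_nonneg.mpr he)
            (by positivity : (0:ℝ) ≤ Real.exp 1 + 2)) (mul_pos hβ hβ).le]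
      have h3 : (s - x) * (s - x) ≤ x * (Real.exp 1 * β / 2) := hd1.trans hd2
      exact le_of_mul_le_mul_left (h2.trans h3) hx'
    calc (L - 1) * s = x * L + (s - x) * L - s := by ring
      _ ≤ (s - x) + Real.exp 1 * β / 2 - s := by linarith
      _ = Real.exp 1 * β / 2 - x := by ring
end

section
/- Let a, β, C > 0 and let φ : ℝ → ℂ be a function such that for every integer n ≥ 0, sup over t ∈ ℝ of |t^n · φ(t)| ≤ C · (nβ/(a·e))^{nβ}. Then |φ(t)| ≤ C·e^{eβ/2} · exp(-a·|t|^{1/β}) for all t ∈ ℝ. -/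
open Real

theorem stmt_4 (a β C : ℝ) (ha : 0 < a) (hβ : 0 < β) (hC : 0 < C) (φ : ℝ → ℂ)
    (h : ∀ n : ℕ, ∀ t : ℝ, ‖(t : ℂ) ^ n * φ t‖
      ≤ C * (((n : ℝ) * β) / (a * Real.exp 1)) ^ ((n : ℝ) * β)) :
    ∀ t : ℝ, ‖φ t‖
      ≤ C * Real.exp (Real.exp 1 * β / 2) * Real.exp (-a * |t| ^ (1 / β)) := by
  intro t
  set x := a * |t| ^ (1 / β) with hxdef
  have hx0 : 0 ≤ x := mul_nonneg ha.le (Real.rpow_nonneg (abs_nonneg t) _)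
  have he2 : (2 : ℝ) ≤ Real.exp 1 := by
    have := Real.add_one_le_exp (1 : ℝ); linarith
  have hβe : β ≤ Real.exp 1 * β / 2 := by nlinarith
  rw [show -a * |t| ^ (1 / β) = -x by ring]
  by_cases hcase : x ≤ Real.exp 1 * β / 2
  · have h0 := h 0 t
    simp only [Nat.cast_zero, zero_mul, pow_zero, one_mul, Real.rpow_zero, mul_one] at h0
    have : (1 : ℝ) ≤ Real.exp (Real.exp 1 * β / 2) * Real.exp (-x) := by
      rw [← Real.exp_add]
      have : (0:ℝ) ≤ Real.exp 1 * β / 2 + -x := by linarith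
      calc (1:ℝ) = Real.exp 0 := (Real.exp_zero).symm
        _ ≤ _ := Real.exp_le_exp.mpr this
    calc ‖φ t‖ ≤ C := h0
      _ = C * 1 := (mul_one C).symm
      _ ≤ C * (Real.exp (Real.exp 1 * β / 2) * Real.exp (-x)) := by
          exact mul_le_mul_of_nonneg_left this hC.le
      _ = C * Real.exp (Real.exp 1 * β / 2) * Real.exp (-x) := by ring
  · push_neg at hcase
    have hxpos : 0 < x := lt_of_le_of_lt (by positivity) hcase
    have htpos : 0 < |t| := by
      rcases eq_or_lt_of_le (abs_nonneg t) with h' | h'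
      · exfalso
        rw [hxdef, ← h', Real.zero_rpow (by positivity), mul_zero] at hxpos
        exact lt_irrefl 0 hxpos
      · exact h'
    set n := ⌊x / β⌋₊ with hndef
    set u := (n : ℝ) * β with hudef
    have hn1 : 1 ≤ n := by
      apply Nat.le_floor
      rw [Nat.cast_one, le_div_iff₀ hβ]
      nlinarith
    have hu_pos : 0 < u := by
      have : (1:ℝ) ≤ (n:ℝ) := by exact_mod_cast hn1
      nlinarith
    have hu_le : u ≤ x := by
      have := Nat.floor_le (div_nonneg hx0 hβ.le)
      rw [hudef]
      calc (n:ℝ) * β ≤ (x / β) * β := by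
            exact mul_le_mul_of_nonneg_right this hβ.le
        _ = x := by field_simp
    have hu_gt : x - β < u := by
      have := Nat.lt_floor_add_one (x / β)
      have h2 : x / β * β < ((n:ℝ) + 1) * β := by
        exact mul_lt_mul_of_pos_right this hβ
      rw [div_mul_cancel₀ _ hβ.ne'] at h2
      rw [hudef]; nlinarith
    have ht_eq : |t| = (x / a) ^ β := by
      have h1 : x / a = |t| ^ (1 / β) := by
        rw [hxdef]; field_simp
      rw [h1, ← Real.rpow_mul (abs_nonneg t), one_div_mul_cancel hβ.ne', Real.rpow_one]
    have hxa0 : 0 ≤ x / a := div_nonneg hx0 ha.le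
    have htn : |t| ^ n = (x / a) ^ u := by
      rw [← Real.rpow_natCast |t| n, ht_eq, ← Real.rpow_mul hxa0, hudef, mul_comm]
    have habs := h n t
    rw [norm_mul, norm_pow, Complex.norm_real, Real.norm_eq_abs] at habs
    have htn_pos : (0:ℝ) < |t| ^ n := pow_pos htpos n
    have hφ : ‖φ t‖ ≤ C * (u / (a * Real.exp 1)) ^ u / |t| ^ n := by
      rw [le_div_iff₀ htn_pos, mul_comm]
      exact habs
    have hkey : (u / (a * Real.exp 1)) ^ u / |t| ^ n = (u / x) ^ u * Real.exp (-u) := by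
      rw [htn]
      rw [← Real.div_rpow (by positivity) hxa0]
      have heq : u / (a * Real.exp 1) / (x / a) = u / x * (Real.exp 1)⁻¹ := by
        field_simp
      rw [heq, Real.mul_rpow (by positivity) (by positivity),
        Real.inv_rpow (Real.exp_pos 1).le, Real.exp_one_rpow, ← Real.exp_neg]
    have hb1 : (u / x) ^ u ≤ 1 :=
      Real.rpow_le_one (by positivity) (by rw [div_le_one hxpos]; exact hu_le) hu_pos.le
    have hb2 : Real.exp (-u) ≤ Real.exp (β - x) := Real.exp_le_exp.mpr (by linarith)
    calc ‖φ t‖ ≤ C * (u / (a * Real.exp 1)) ^ u / |t| ^ n := hφ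
      _ = C * ((u / x) ^ u * Real.exp (-u)) := by rw [mul_div_assoc, hkey]
      _ ≤ C * (1 * Real.exp (β - x)) := by
          apply mul_le_mul_of_nonneg_left _ hC.le
          exact mul_le_mul hb1 hb2 (Real.exp_pos _).le zero_le_one
      _ = C * Real.exp β * Real.exp (-x) := by
          rw [one_mul, show β - x = β + -x by ring, Real.exp_add]; ring
      _ ≤ C * Real.exp (Real.exp 1 * β / 2) * Real.exp (-x) := by
          apply mul_le_mul_of_nonneg_right _ (Real.exp_pos _).le
          exact mul_le_mul_of_nonneg_left (Real.exp_le_exp.mpr hβe) hC.le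
end

section
/- Let φ : ℝ → ℂ satisfy |t^n φ(t)| ≤ C·A^n·n^{nβ} for all t ∈ ℝ and all integers n ≥ 0 (constants C, A, β > 0, with 0^0 = 1). Then the Fourier transform φ̂(τ) = ∫ e^{-itτ} φ(t) dt satisfies: there exist constants C', A' > 0 such that ‖d^n φ̂/dτ^n‖_{L^∞(ℝ)} ≤ C' · (A')^n · n^{nβ} for all n ≥ 0. -/
open Real

open MeasureTheory FourierTransform

lemma aux_growth6 (β : ℝ) (hβ : 0 < β) (n : ℕ) (hn : 1 ≤ n) :
    ((n:ℝ)+2) ^ (((n:ℝ)+2)*β) ≤ ((3:ℝ)^(3*β))^n * (n:ℝ)^((n:ℝ)*β) := by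
  have hN : (1:ℝ) ≤ (n:ℝ) := by exact_mod_cast hn
  have hb : (0:ℝ) < (n:ℝ)+2 := by linarith
  have h1 : ((n:ℝ)+2) ^ (((n:ℝ)+2)*β) = ((n:ℝ)+2)^((n:ℝ)*β) * ((n:ℝ)+2)^(2*β) := by
    rw [← Real.rpow_add hb]; ring_nf
  have h2 : ((n:ℝ)+2)^((n:ℝ)*β) ≤ (3*(n:ℝ))^((n:ℝ)*β) :=
    Real.rpow_le_rpow (by positivity) (by linarith) (by positivity)
  have h3 : (3*(n:ℝ))^((n:ℝ)*β) = (3:ℝ)^((n:ℝ)*β) * (n:ℝ)^((n:ℝ)*β) :=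
    Real.mul_rpow (by norm_num) (by positivity)
  have h4 : ((n:ℝ)+2) ≤ (3:ℝ)^(n:ℕ) := by
    have := one_add_mul_le_pow (a := (2:ℝ)) (by norm_num) n
    calc ((n:ℝ)+2) ≤ 1 + (n:ℝ)*2 := by linarith
    _ ≤ ((1:ℝ)+2)^n := this
    _ = (3:ℝ)^n := by norm_num
  have h5 : ((n:ℝ)+2)^(2*β) ≤ ((3:ℝ)^(n:ℕ))^(2*β) :=
    Real.rpow_le_rpow (by positivity) h4 (by positivity)
  have h6 : ((3:ℝ)^(n:ℕ):ℝ)^(2*β) = (3:ℝ)^((n:ℝ)*(2*β)) := by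
    rw [← Real.rpow_natCast 3 n, ← Real.rpow_mul (by norm_num)]
  have h7 : ((3:ℝ)^(3*β))^n = (3:ℝ)^((3*β)*(n:ℝ)) := by
    rw [← Real.rpow_natCast ((3:ℝ)^(3*β)) n, ← Real.rpow_mul (by norm_num)]
  have h8 : (3:ℝ)^((n:ℝ)*β) * (3:ℝ)^((n:ℝ)*(2*β)) = (3:ℝ)^((3*β)*(n:ℝ)) := by
    rw [← Real.rpow_add (by norm_num)]; ring_nf
  calc ((n:ℝ)+2) ^ (((n:ℝ)+2)*β)
      = ((n:ℝ)+2)^((n:ℝ)*β) * ((n:ℝ)+2)^(2*β) := h1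
    _ ≤ ((3:ℝ)^((n:ℝ)*β) * (n:ℝ)^((n:ℝ)*β)) * ((3:ℝ)^((n:ℝ)*(2*β))) := by
        rw [← h3]
        exact mul_le_mul h2 (h5.trans_eq h6) (by positivity) (by positivity)
    _ = ((3:ℝ)^((3*β)*(n:ℝ))) * (n:ℝ)^((n:ℝ)*β) := by rw [← h8]; ring
    _ = ((3:ℝ)^(3*β))^n * (n:ℝ)^((n:ℝ)*β) := by rw [h7]

theorem stmt_6 (C A β : ℝ) (hC : 0 < C) (hA : 0 < A) (hβ : 0 < β) (φ : ℝ → ℂ)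
    (hm : Measurable φ)
    (h : ∀ n : ℕ, ∀ t : ℝ, ‖(t : ℂ) ^ n * φ t‖
      ≤ C * A ^ n * (n : ℝ) ^ ((n : ℝ) * β)) :
    ∃ C' A' : ℝ, 0 < C' ∧ 0 < A' ∧ ∀ n : ℕ, ∀ τ : ℝ,
      ‖iteratedDeriv n
          (fun τ : ℝ => ∫ t : ℝ, Complex.exp (-Complex.I * t * τ) * φ t) τ‖
        ≤ C' * A' ^ n * (n : ℝ) ^ ((n : ℝ) * β) := by
  have hπ : (0:ℝ) < π := Real.pi_pos
  set M : ℕ → ℝ := fun n => C * A ^ n * (n : ℝ) ^ ((n : ℝ) * β) with hMdef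
  have hM0 : ∀ n, 0 ≤ M n := fun n => by positivity
  have habs : ∀ (n:ℕ) (t:ℝ), |t|^n * ‖φ t‖ ≤ M n := by
    intro n t
    have := h n t
    rwa [norm_mul, norm_pow, Complex.norm_real, Real.norm_eq_abs] at this
  -- pointwise domination
  have hptw : ∀ (n:ℕ) (t:ℝ), |t|^n * ‖φ t‖ ≤ (M n + M (n+2)) * (1 + t^2)⁻¹ := by
    intro n t
    have hpos : (0:ℝ) < 1 + t^2 := by positivity
    rw [← div_eq_mul_inv, le_div_iff₀ hpos]
    have h1 := habs n t
    have h2 := habs (n+2) t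
    have he : |t|^(n+2) = |t|^n * t^2 := by rw [pow_add, sq_abs]
    nlinarith [norm_nonneg (φ t), pow_nonneg (abs_nonneg t) n]
  have hdom : ∀ n:ℕ, Integrable (fun t:ℝ => (M n + M (n+2)) * (1 + t^2)⁻¹) :=
    fun n => integrable_inv_one_add_sq.const_mul _
  have hmeasA : ∀ n:ℕ, Measurable (fun t:ℝ => |t|^n * ‖φ t‖) := fun n =>
    ((continuous_abs.measurable.pow_const n).mul (continuous_norm.measurable.comp hm))
  have hI : ∀ n:ℕ, Integrable (fun t : ℝ => |t| ^ n * ‖φ t‖) := by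
    intro n
    refine (hdom n).mono' (hmeasA n).aestronglyMeasurable (ae_of_all _ fun t => ?_)
    rw [Real.norm_eq_abs, abs_of_nonneg (by positivity)]
    exact hptw n t
  have hIval : ∀ n:ℕ, ∫ t : ℝ, |t|^n * ‖φ t‖ ≤ (M n + M (n+2)) * π := by
    intro n
    calc ∫ t : ℝ, |t|^n * ‖φ t‖
        ≤ ∫ t : ℝ, (M n + M (n+2)) * (1 + t^2)⁻¹ :=
          integral_mono (hI n) (hdom n) (fun t => hptw n t)
      _ = (M n + M (n+2)) * π := by rw [integral_const_mul, integral_univ_inv_one_add_sq]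
  have hInorm : ∀ n:ℕ, Integrable (fun v : ℝ => ‖v‖^n * ‖φ v‖) := by
    intro n
    have := hI n
    simpa [Real.norm_eq_abs] using this
  have hsmul : ∀ n:ℕ, Integrable (fun x : ℝ => x ^ n • φ x) := by
    intro n
    have heq : (fun x : ℝ => x ^ n • φ x) = fun x : ℝ => (x:ℂ)^n * φ x := by
      funext x
      rw [Complex.real_smul]
      push_cast
      ring
    rw [heq]
    refine (hdom n).mono'
      (((Complex.measurable_ofReal.comp measurable_id).pow_const n).mul hm).aestronglyMeasurable
      (ae_of_all _ fun t => ?_)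
    have : ‖(t:ℂ)^n * φ t‖ = |t|^n * ‖φ t‖ := by
      rw [norm_mul, norm_pow, Complex.norm_real, Real.norm_eq_abs]
    rw [this]
    exact hptw n t
  -- rewrite the integral as the Fourier transform
  have hFeq : (fun τ : ℝ => ∫ t : ℝ, Complex.exp (-Complex.I * t * τ) * φ t)
      = fun τ => 𝓕 φ ((2*π)⁻¹ * τ) := by
    funext τ
    rw [Real.fourier_eq']
    congr 1
    funext t
    rw [smul_eq_mul]
    congr 2
    have hinner : (inner ℝ t ((2*π)⁻¹ * τ) : ℝ) = t * ((2*π)⁻¹ * τ) := Real.inner_apply _ _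
    rw [hinner]
    have hr : -2*π*(t * ((2*π)⁻¹ * τ)) = -(t*τ) := by field_simp
    rw [hr]
    push_cast
    ring
  have hcd : ∀ n:ℕ, ContDiff ℝ (n:ℕ∞) (𝓕 φ) :=
    fun n => Real.contDiff_fourier (fun k _ => hInorm k)
  have hiter : ∀ n:ℕ, iteratedDeriv n (𝓕 φ)
      = 𝓕 (fun x : ℝ => (-2 * π * Complex.I * x) ^ n • φ x) :=
    fun n => Real.iteratedDeriv_fourier (N := (n:ℕ∞)) (fun k _ => hsmul k) le_rfl
  -- the key bound
  have key : ∀ (n:ℕ) (τ:ℝ),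
      ‖iteratedDeriv n
        (fun τ : ℝ => ∫ t : ℝ, Complex.exp (-Complex.I * t * τ) * φ t) τ‖
      ≤ (M n + M (n+2)) * π := by
    intro n τ
    rw [hFeq, iteratedDeriv_comp_const_smul (hcd n) ((2*π)⁻¹)]
    rw [hiter n]
    have hnorm : ‖((2*π)⁻¹:ℝ)^n •
        𝓕 (fun x : ℝ => (-2 * π * Complex.I * x) ^ n • φ x) ((2*π)⁻¹ * τ)‖
        = ((2*π)⁻¹)^n * ‖𝓕 (fun x : ℝ => (-2 * π * Complex.I * x) ^ n • φ x) ((2*π)⁻¹ * τ)‖ := by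
      rw [norm_smul, Real.norm_eq_abs, abs_pow, abs_of_pos (by positivity)]
    rw [hnorm]
    have hb : ‖𝓕 (fun x : ℝ => (-2 * π * Complex.I * x) ^ n • φ x) ((2*π)⁻¹ * τ)‖
        ≤ ∫ x : ℝ, ‖(-2 * π * Complex.I * (x:ℂ)) ^ n • φ x‖ :=
      VectorFourier.norm_fourierIntegral_le_integral_norm _ _ _ _ _
    have hval : ∫ x : ℝ, ‖(-2 * π * Complex.I * (x:ℂ)) ^ n • φ x‖
        = (2*π)^n * ∫ x : ℝ, |x|^n * ‖φ x‖ := by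
      rw [← integral_const_mul]
      congr 1
      funext x
      rw [smul_eq_mul, norm_mul, norm_pow]
      have : ‖-2 * π * Complex.I * (x:ℂ)‖ = (2*π) * |x| := by
        simp [abs_of_pos hπ]
      rw [this, mul_pow]
      ring
    calc ((2*π)⁻¹)^n * ‖𝓕 (fun x : ℝ => (-2 * π * Complex.I * x) ^ n • φ x) ((2*π)⁻¹ * τ)‖
        ≤ ((2*π)⁻¹)^n * ((2*π)^n * ∫ x : ℝ, |x|^n * ‖φ x‖) := by
          rw [← hval]; gcongr
      _ = ∫ x : ℝ, |x|^n * ‖φ x‖ := by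
          rw [← mul_assoc, ← mul_pow, inv_mul_cancel₀ (by positivity), one_pow, one_mul]
      _ ≤ (M n + M (n+2)) * π := hIval n
  -- numeric conclusion
  set K : ℝ := (3:ℝ)^(3*β) with hKdef
  have hK1 : (1:ℝ) ≤ K := Real.one_le_rpow (by norm_num) (by positivity)
  refine ⟨π*C*(1 + A^2 + A^2 * (2:ℝ)^(2*β)), A*K, by positivity, by positivity, ?_⟩
  intro n τ
  refine (key n τ).trans ?_
  rcases Nat.eq_zero_or_pos n with rfl | hn
  · have hM0e : M 0 = C := by simp [hMdef]
    have hM2e : M 2 = C * A^2 * (2:ℝ)^(2*β) := by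
      simp [hMdef]
    rw [hM0e, hM2e]
    simp only [pow_zero, Nat.cast_zero, zero_mul, Real.rpow_zero, mul_one]
    nlinarith [mul_nonneg (mul_nonneg hπ.le hC.le) (sq_nonneg A)]
  · -- n ≥ 1
    have hP : (0:ℝ) < (n:ℝ)^((n:ℝ)*β) := Real.rpow_pos_of_pos (by exact_mod_cast hn) _
    have hKn : (1:ℝ) ≤ K^n := one_le_pow₀ hK1
    have hMn2 : M (n+2) ≤ C * A^(n+2) * (K^n * (n:ℝ)^((n:ℝ)*β)) := by
      have hg := aux_growth6 β hβ n hn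
      have hcast : ((n+2:ℕ):ℝ) = (n:ℝ)+2 := by push_cast; ring
      calc M (n+2) = C * A^(n+2) * (((n:ℝ)+2) ^ (((n:ℝ)+2)*β)) := by
            rw [hMdef]; simp only; rw [hcast]
        _ ≤ C * A^(n+2) * (K^n * (n:ℝ)^((n:ℝ)*β)) := by
            gcongr
    have h2b : (0:ℝ) ≤ (2:ℝ)^(2*β) := Real.rpow_nonneg (by norm_num) _
    have h1 : M n ≤ C * A^n * (K^n * (n:ℝ)^((n:ℝ)*β)) := by
      have hle : (n:ℝ)^((n:ℝ)*β) ≤ K^n * (n:ℝ)^((n:ℝ)*β) := le_mul_of_one_le_left hP.le hKn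
      calc M n = C * A^n * ((n:ℝ)^((n:ℝ)*β)) := by rw [hMdef]
        _ ≤ C * A^n * (K^n * (n:ℝ)^((n:ℝ)*β)) := by gcongr
    calc (M n + M (n+2)) * π
        ≤ (C * A^n * (K^n * (n:ℝ)^((n:ℝ)*β)) + C * A^(n+2) * (K^n * (n:ℝ)^((n:ℝ)*β))) * π :=
          mul_le_mul_of_nonneg_right (add_le_add h1 hMn2) hπ.le
      _ = π*C*(1+A^2) * (A^n * K^n) * ((n:ℝ)^((n:ℝ)*β)) := by ring
      _ ≤ π*C*(1 + A^2 + A^2*(2:ℝ)^(2*β)) * (A^n*K^n) * ((n:ℝ)^((n:ℝ)*β)) := by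
          have hs : (1:ℝ) ≤ (2:ℝ)^(2*β) := Real.one_le_rpow (by norm_num) (by positivity)
          have hmid : 1+A^2 ≤ 1 + A^2 + A^2*(2:ℝ)^(2*β) := by nlinarith [sq_nonneg A]
          exact mul_le_mul_of_nonneg_right (mul_le_mul_of_nonneg_right
            (mul_le_mul_of_nonneg_left hmid (by positivity)) (by positivity)) hP.le
      _ = π*C*(1 + A^2 + A^2*(2:ℝ)^(2*β)) * (A*K)^n * ((n:ℝ)^((n:ℝ)*β)) := by rw [mul_pow]
end
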